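/- The occupancy measure μ^π, viewed as a function of the policy π (with the MDP data fixed), maps into the polytope K = {μ ∈ ℝ^{S×A} : μ ≥ 0, Σ_a μ(s,a) = q(s) + γ Σ_{s',a'} P(s|s',a') μ(s',a') for all s}; conversely, any μ in this polytope with Σ_a μ(s,a) > 0 for all s is the occupancy measure of the policy π(a|s) = μ(s,a)/Σ_{a'} μ(s,a'). -/
import Mathlib

open scoped BigOperators

noncomputable section

def stepDist {S A : Type*} [Fintype S] [Fintype A]
    (P : S → A → S → ℝ) (pol : S → A → ℝ) (q : S → ℝ) : ℕ → S → A → ℝ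
  | 0 => fun s a => q s * pol s a
  | n + 1 => fun s' a' => (∑ s, ∑ a, stepDist P pol q n s a * P s a s') * pol s' a'
def occ {S A : Type*} [Fintype S] [Fintype A]
    (P : S → A → S → ℝ) (pol : S → A → ℝ) (q : S → ℝ) (γ : ℝ) (s : S) (a : A) : ℝ :=
  ∑' n : ℕ, γ ^ n * stepDist P pol q n s a

section Aux

variable {S A : Type*} [Fintype S] [Fintype A]

def stateDist (P : S → A → S → ℝ) (pol : S → A → ℝ) (q : S → ℝ) : ℕ → S → ℝ
  | 0 => q
  | n + 1 => fun s' => ∑ s, ∑ a, stepDist P pol q n s a * P s a s'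

lemma stepDist_eq_stateDist (P : S → A → S → ℝ) (pol : S → A → ℝ) (q : S → ℝ)
    (n : ℕ) (s : S) (a : A) :
    stepDist P pol q n s a = stateDist P pol q n s * pol s a := by
  cases n <;> rfl

lemma stepDist_nonneg {P : S → A → S → ℝ} {pol : S → A → ℝ} {q : S → ℝ}
    (hP : ∀ s a s', 0 ≤ P s a s') (hpol : ∀ s a, 0 ≤ pol s a) (hq : ∀ s, 0 ≤ q s) :
    ∀ n s a, 0 ≤ stepDist P pol q n s a := by
  intro n
  induction n with
  | zero => intro s a; exact mul_nonneg (hq s) (hpol s a)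
  | succ n ih =>
      intro s a
      exact mul_nonneg (Finset.sum_nonneg fun s' _ => Finset.sum_nonneg fun a' _ =>
        mul_nonneg (ih s' a') (hP s' a' s)) (hpol s a)

lemma stepDist_total {P : S → A → S → ℝ} {pol : S → A → ℝ} {q : S → ℝ}
    (hP1 : ∀ s a, ∑ s', P s a s' = 1) (hpol1 : ∀ s, ∑ a, pol s a = 1)
    (hq1 : ∑ s, q s = 1) :
    ∀ n, ∑ s, ∑ a, stepDist P pol q n s a = 1 := by
  intro n
  induction n with
  | zero =>
      simp only [stepDist, ← Finset.mul_sum, hpol1, mul_one]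
      exact hq1
  | succ n ih =>
      have h1 : ∀ s', ∑ a', stepDist P pol q (n + 1) s' a'
          = ∑ s, ∑ a, stepDist P pol q n s a * P s a s' := by
        intro s'
        simp only [stepDist, ← Finset.mul_sum, hpol1, mul_one]
      calc ∑ s', ∑ a', stepDist P pol q (n + 1) s' a'
          = ∑ s', ∑ s, ∑ a, stepDist P pol q n s a * P s a s' :=
            Finset.sum_congr rfl fun s' _ => h1 s'
        _ = ∑ s, ∑ s', ∑ a, stepDist P pol q n s a * P s a s' := Finset.sum_comm
        _ = ∑ s, ∑ a, ∑ s', stepDist P pol q n s a * P s a s' :=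
            Finset.sum_congr rfl fun s _ => Finset.sum_comm
        _ = ∑ s, ∑ a, stepDist P pol q n s a := by
            simp only [← Finset.mul_sum, hP1, mul_one]
        _ = 1 := ih

lemma stepDist_le_one {P : S → A → S → ℝ} {pol : S → A → ℝ} {q : S → ℝ}
    (hP : ∀ s a s', 0 ≤ P s a s') (hP1 : ∀ s a, ∑ s', P s a s' = 1)
    (hpol : ∀ s a, 0 ≤ pol s a) (hpol1 : ∀ s, ∑ a, pol s a = 1)
    (hq : ∀ s, 0 ≤ q s) (hq1 : ∑ s, q s = 1)
    (n : ℕ) (s : S) (a : A) : stepDist P pol q n s a ≤ 1 := by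
  have h1 : stepDist P pol q n s a ≤ ∑ a', stepDist P pol q n s a' :=
    Finset.single_le_sum (fun a' _ => stepDist_nonneg hP hpol hq n s a') (Finset.mem_univ a)
  have h2 : ∑ a', stepDist P pol q n s a' ≤ ∑ s', ∑ a', stepDist P pol q n s' a' :=
    Finset.single_le_sum (fun s' _ => Finset.sum_nonneg
      fun a' _ => stepDist_nonneg hP hpol hq n s' a') (Finset.mem_univ s)
  calc stepDist P pol q n s a ≤ ∑ s', ∑ a', stepDist P pol q n s' a' := h1.trans h2
    _ = 1 := stepDist_total hP1 hpol1 hq1 n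

lemma summable_occ {P : S → A → S → ℝ} {pol : S → A → ℝ} {q : S → ℝ} {γ : ℝ}
    (hP : ∀ s a s', 0 ≤ P s a s') (hP1 : ∀ s a, ∑ s', P s a s' = 1)
    (hpol : ∀ s a, 0 ≤ pol s a) (hpol1 : ∀ s, ∑ a, pol s a = 1)
    (hq : ∀ s, 0 ≤ q s) (hq1 : ∑ s, q s = 1)
    (hγ0 : 0 ≤ γ) (hγ1 : γ < 1) (s : S) (a : A) :
    Summable (fun n => γ ^ n * stepDist P pol q n s a) := by
  refine Summable.of_nonneg_of_le
    (fun n => mul_nonneg (pow_nonneg hγ0 n) (stepDist_nonneg hP hpol hq n s a))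
    (fun n => ?_) (summable_geometric_of_lt_one hγ0 hγ1)
  calc γ ^ n * stepDist P pol q n s a ≤ γ ^ n * 1 :=
        mul_le_mul_of_nonneg_left (stepDist_le_one hP hP1 hpol hpol1 hq hq1 n s a)
          (pow_nonneg hγ0 n)
    _ = γ ^ n := mul_one _

lemma flow_unique {Q : S → S → ℝ} {q : S → ℝ} {γ : ℝ}
    (hQ : ∀ s' s, 0 ≤ Q s' s) (hQ1 : ∀ s', ∑ s, Q s' s = 1)
    (hγ0 : 0 ≤ γ) (hγ1 : γ < 1) {x y : S → ℝ}
    (hx : ∀ s, x s = q s + γ * ∑ s', Q s' s * x s')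
    (hy : ∀ s, y s = q s + γ * ∑ s', Q s' s * y s') : x = y := by
  have he : ∀ s, x s - y s = γ * ∑ s', Q s' s * (x s' - y s') := by
    intro s
    rw [hx s, hy s]
    simp only [mul_sub, Finset.sum_sub_distrib]
    ring
  have key : ∑ s, |x s - y s| ≤ γ * ∑ s, |x s - y s| := by
    calc ∑ s, |x s - y s| ≤ ∑ s, γ * ∑ s', Q s' s * |x s' - y s'| := by
          refine Finset.sum_le_sum fun s _ => ?_
          rw [he s, abs_mul, abs_of_nonneg hγ0]
          refine mul_le_mul_of_nonneg_left ?_ hγ0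
          refine (Finset.abs_sum_le_sum_abs _ _).trans (le_of_eq ?_)
          exact Finset.sum_congr rfl fun s' _ => by
            rw [abs_mul, abs_of_nonneg (hQ s' s)]
      _ = γ * ∑ s', (∑ s, Q s' s) * |x s' - y s'| := by
          rw [← Finset.mul_sum, Finset.sum_comm]
          simp only [Finset.sum_mul]
      _ = γ * ∑ s', |x s' - y s'| := by simp only [hQ1, one_mul]
  have hnn : 0 ≤ ∑ s, |x s - y s| := Finset.sum_nonneg fun s _ => abs_nonneg _
  have hz : ∑ s, |x s - y s| = 0 := by nlinarith
  funext s
  have := (Finset.sum_eq_zero_iff_of_nonneg fun s _ => abs_nonneg (x s - y s)).mp hz s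
    (Finset.mem_univ s)
  have := abs_eq_zero.mp this
  linarith

end Aux

/-- The occupancy measure of any policy lies in the Bellman-flow polytope `K`,
and conversely any nonnegative Bellman-flow-feasible `μ` with positive state
marginals is the occupancy measure of the policy `π(a|s) = μ(s,a)/∑_{a'} μ(s,a')`. -/
theorem occupancy_polytope_characterization {S A : Type*} [Fintype S] [Fintype A]
    (P : S → A → S → ℝ) (q : S → ℝ) (γ : ℝ)
    (hP : ∀ s a s', 0 ≤ P s a s') (hP1 : ∀ s a, ∑ s', P s a s' = 1)
    (hq : ∀ s, 0 ≤ q s) (hq1 : ∑ s, q s = 1)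
    (hγ0 : 0 ≤ γ) (hγ1 : γ < 1) :
    (∀ pol : S → A → ℝ, (∀ s a, 0 ≤ pol s a) → (∀ s, ∑ a, pol s a = 1) →
        (∀ s a, 0 ≤ occ P pol q γ s a) ∧
          ∀ s, ∑ a, occ P pol q γ s a =
            q s + γ * ∑ s', ∑ a', P s' a' s * occ P pol q γ s' a') ∧
      ∀ μ : S → A → ℝ,
        (∀ s a, 0 ≤ μ s a) →
        (∀ s, ∑ a, μ s a = q s + γ * ∑ s', ∑ a', P s' a' s * μ s' a') →
        (∀ s, 0 < ∑ a, μ s a) →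
          occ P (fun s a => μ s a / ∑ a', μ s a') q γ = μ := by
  have part1 : ∀ pol : S → A → ℝ, (∀ s a, 0 ≤ pol s a) → (∀ s, ∑ a, pol s a = 1) →
      (∀ s a, 0 ≤ occ P pol q γ s a) ∧
        ∀ s, ∑ a, occ P pol q γ s a =
          q s + γ * ∑ s', ∑ a', P s' a' s * occ P pol q γ s' a' := by
    intro pol hpol hpol1
    have hsum : ∀ s a, Summable (fun n => γ ^ n * stepDist P pol q n s a) :=
      fun s a => summable_occ hP hP1 hpol hpol1 hq hq1 hγ0 hγ1 s a
    constructor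
    · intro s a
      exact tsum_nonneg fun n =>
        mul_nonneg (pow_nonneg hγ0 n) (stepDist_nonneg hP hpol hq n s a)
    · intro s
      have hswap : ∑ a, occ P pol q γ s a
          = ∑' n, ∑ a, γ ^ n * stepDist P pol q n s a := by
        rw [Summable.tsum_finsetSum fun a _ => hsum s a]
        rfl
      have hg : Summable (fun n => ∑ a, γ ^ n * stepDist P pol q n s a) :=
        summable_sum fun a _ => hsum s a
      rw [hswap, Summable.tsum_eq_zero_add hg]
      have h0 : ∑ a, γ ^ 0 * stepDist P pol q 0 s a = q s := by
        simp only [pow_zero, one_mul, stepDist, ← Finset.mul_sum, hpol1, mul_one]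
      have htail : ∀ n, (∑ a, γ ^ (n + 1) * stepDist P pol q (n + 1) s a)
          = γ * ∑ s', ∑ a', P s' a' s * (γ ^ n * stepDist P pol q n s' a') := by
        intro n
        have : ∑ a, γ ^ (n + 1) * stepDist P pol q (n + 1) s a
            = γ ^ (n + 1) * ((∑ s', ∑ a', stepDist P pol q n s' a' * P s' a' s)
              * ∑ a, pol s a) := by
          simp only [stepDist, Finset.mul_sum]
        rw [this, hpol1, mul_one, Finset.mul_sum, Finset.mul_sum]
        refine Finset.sum_congr rfl fun s' _ => ?_
        rw [Finset.mul_sum, Finset.mul_sum]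
        exact Finset.sum_congr rfl fun a' _ => by ring
      rw [h0, tsum_congr htail]
      congr 1
      rw [tsum_mul_left]
      congr 1
      rw [Summable.tsum_finsetSum fun s' _ => summable_sum fun a' _ => (hsum s' a').mul_left _]
      refine Finset.sum_congr rfl fun s' _ => ?_
      rw [Summable.tsum_finsetSum fun a' _ => (hsum s' a').mul_left _]
      refine Finset.sum_congr rfl fun a' _ => ?_
      rw [tsum_mul_left]
      rfl
  refine ⟨part1, ?_⟩
  intro μ hμ hflow hpos
  set m : S → ℝ := fun s => ∑ a, μ s a with hm
  set pol : S → A → ℝ := fun s a => μ s a / ∑ a', μ s a' with hpoldef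
  have hmne : ∀ s, m s ≠ 0 := fun s => ne_of_gt (hpos s)
  have hpol : ∀ s a, 0 ≤ pol s a := fun s a =>
    div_nonneg (hμ s a) (le_of_lt (hpos s))
  have hpol1 : ∀ s, ∑ a, pol s a = 1 := by
    intro s
    simp only [hpoldef, ← Finset.sum_div]
    exact div_self (hmne s)
  have hμfac : ∀ s a, μ s a = m s * pol s a := by
    intro s a
    simp only [hpoldef, hm]
    rw [mul_div_cancel₀ _ (hmne s)]
  obtain ⟨hocc_nn, hocc_flow⟩ := part1 pol hpol hpol1
  -- occupancy factorizes through the state distribution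
  set ν : S → ℝ := fun s => ∑' n, γ ^ n * stateDist P pol q n s with hν
  have hfac : ∀ s a, occ P pol q γ s a = ν s * pol s a := by
    intro s a
    show occ P pol q γ s a = (∑' n, γ ^ n * stateDist P pol q n s) * pol s a
    unfold occ
    rw [← tsum_mul_right]
    exact tsum_congr fun n => by rw [stepDist_eq_stateDist]; ring
  have hmarg : ∀ s, ∑ a, occ P pol q γ s a = ν s := by
    intro s
    simp only [hfac, ← Finset.mul_sum, hpol1, mul_one]
  set Q : S → S → ℝ := fun s' s => ∑ a', pol s' a' * P s' a' s with hQdef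
  have hQ : ∀ s' s, 0 ≤ Q s' s := fun s' s =>
    Finset.sum_nonneg fun a' _ => mul_nonneg (hpol s' a') (hP s' a' s)
  have hQ1 : ∀ s', ∑ s, Q s' s = 1 := by
    intro s'
    rw [hQdef]
    rw [Finset.sum_comm]
    simp only [← Finset.mul_sum, hP1, mul_one]
    exact hpol1 s'
  have hνflow : ∀ s, ν s = q s + γ * ∑ s', Q s' s * ν s' := by
    intro s
    have := hocc_flow s
    rw [hmarg s] at this
    rw [this]
    congr 1
    congr 1
    refine Finset.sum_congr rfl fun s' _ => ?_
    rw [hQdef, Finset.sum_mul]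
    refine Finset.sum_congr rfl fun a' _ => ?_
    rw [hfac s' a']
    ring
  have hmflow : ∀ s, m s = q s + γ * ∑ s', Q s' s * m s' := by
    intro s
    rw [show m s = ∑ a, μ s a from rfl, hflow s]
    congr 1
    congr 1
    refine Finset.sum_congr rfl fun s' _ => ?_
    rw [hQdef, Finset.sum_mul]
    refine Finset.sum_congr rfl fun a' _ => ?_
    rw [hμfac s' a']
    ring
  have hνm : ν = m := flow_unique hQ hQ1 hγ0 hγ1 hνflow hmflow
  funext s a
  rw [hfac s a, hνm, ← hμfac s a]
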